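/- For any two nodes q and v and hop bounds h1, h2, if δ^{h1}(q,u) and δ^{h1}(q,v) are finite and witnessed by paths P_1 (q to u) and P_2 (q to v) neither containing the edge (u,v), then the graph contains a cycle of total weight at most w(u,v) + δ^{h1}(q,u) + δ^{h1}(q,v); consequently, the minimum-cycle weight of G is at most this quantity. -/

import Mathlib

open scoped ENNReal

variable {V : Type*}

/-- `p` is a walk from `s` to `t` along edges of `E`. -/
def IsWalkFrom (E : V → V → Prop) (s t : V) (p : List V) : Prop :=
  List.Chain E s p ∧ (s :: p).getLast (List.cons_ne_nil s p) = t

/-- Total weight of the walk `s :: p`. -/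
noncomputable def walkWeight (w : V → V → NNReal) (s : V) (p : List V) : ℝ≥0∞ :=
  (List.zipWith (fun a b => ((w a b : ℝ≥0∞))) (s :: p) p).sum

/-- `h`-hop-bounded shortest-path distance (`⊤` if no walk with at most `h` edges exists). -/
noncomputable def hopDist (E : V → V → Prop) (w : V → V → NNReal) (h : ℕ) (s t : V) : ℝ≥0∞ :=
  ⨅ (p : List V) (_ : IsWalkFrom E s t p) (_ : p.length ≤ h), walkWeight w s p

/-- Shortest-path distance (`⊤` if no walk exists). -/
noncomputable def gdist (E : V → V → Prop) (w : V → V → NNReal) (s t : V) : ℝ≥0∞ :=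
  ⨅ (p : List V) (_ : IsWalkFrom E s t p), walkWeight w s p

/-- `c` is a simple (directed) cycle through `v`: a closed walk from `v` to `v`
with at least one edge and no repeated vertices. -/
def IsCycleThrough (E : V → V → Prop) (v : V) (c : List V) : Prop :=
  IsWalkFrom E v v c ∧ c ≠ [] ∧ c.Nodup

/-- `c` is a simple cycle through `v` in an undirected graph (at least 3 edges,
so that no edge is traversed twice). -/
def IsUCycleThrough (E : V → V → Prop) (v : V) (c : List V) : Prop :=
  IsWalkFrom E v v c ∧ 3 ≤ c.length ∧ c.Nodup

/-- The (undirected) edge `{a, b}` appears on the walk `s :: p`. -/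
def MemEdge (s : V) (p : List V) (a b : V) : Prop :=
  ∃ i, i + 1 ≤ p.length ∧
    ((a = (s :: p).getD i s ∧ b = (s :: p).getD (i + 1) s) ∨
     (b = (s :: p).getD i s ∧ a = (s :: p).getD (i + 1) s))

/-!
Reversing `P1` (edges and weights are symmetric) and appending `P2` gives a `u`–`v` walk of
weight `δ(q,u) + δ(q,v)` that avoids the edge `{u, v}`. Erasing its loops yields a simple
`u`–`v` path of no larger weight using no new edges; as it avoids `{u, v}` it has at least two
edges, so closing it with the edge `(v, u)` gives a simple cycle with at least three edges.
-/
section Walks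

variable {E : V → V → Prop} {w : V → V → NNReal} {s t : V}

@[simp]
lemma isWalkFrom_nil : IsWalkFrom E s t [] ↔ s = t := by
  simp [IsWalkFrom, List.Chain]

@[simp]
lemma isWalkFrom_cons {a : V} {p : List V} :
    IsWalkFrom E s t (a :: p) ↔ E s a ∧ IsWalkFrom E a t p := by
  simp [IsWalkFrom, List.Chain, List.isChain_cons_cons, and_assoc]

@[simp]
lemma walkWeight_nil : walkWeight w s [] = 0 := rfl

@[simp]
lemma walkWeight_cons (a : V) (p : List V) :
    walkWeight w s (a :: p) = w s a + walkWeight w a p := by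
  simp [walkWeight]

@[simp]
lemma not_memEdge_nil (a b : V) : ¬ MemEdge s [] a b := by
  simp [MemEdge]

@[simp]
lemma memEdge_cons {x a b : V} {p : List V} :
    MemEdge s (x :: p) a b ↔ (a = s ∧ b = x ∨ b = s ∧ a = x) ∨ MemEdge x p a b := by
  have hD : ∀ i, i + 1 ≤ p.length →
      (x :: p).getD i s = (x :: p).getD i x ∧ p.getD i s = p.getD i x := fun i hi => by
    have hx : i < (x :: p).length := by simp; omega
    have hp : i < p.length := by omega
    simp only [List.getD_eq_getElem _ _ hx, List.getD_eq_getElem _ _ hp, and_self]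
  constructor
  · rintro ⟨_ | i, hi, h⟩
    · simpa using Or.inl h
    · simp only [List.length_cons, Nat.add_le_add_iff_right] at hi
      simp only [List.getD_cons_succ, (hD i hi).1, (hD i hi).2] at h
      exact Or.inr ⟨i, hi, by simpa only [List.getD_cons_succ] using h⟩
  · rintro (h | ⟨i, hi, h⟩)
    · exact ⟨0, by simp, by simpa using h⟩
    · refine ⟨i + 1, by simpa using hi, ?_⟩
      simpa only [List.getD_cons_succ, (hD i hi).1, (hD i hi).2] using h

lemma IsWalkFrom.append_iff {m : V} {p r : List V} (hp : IsWalkFrom E s m p) :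
    IsWalkFrom E s t (p ++ r) ↔ IsWalkFrom E m t r := by
  induction p generalizing s with
  | nil => rw [isWalkFrom_nil.mp hp]; rfl
  | cons a p ih =>
    rw [isWalkFrom_cons] at hp
    simp [ih hp.2, hp.1]

lemma walkWeight_append (p r : List V) :
    walkWeight w s (p ++ r) =
      walkWeight w s p + walkWeight w ((s :: p).getLast (List.cons_ne_nil s p)) r := by
  induction p generalizing s with
  | nil => simp
  | cons a p ih => simp [ih, add_assoc]

lemma memEdge_append {a b : V} (p r : List V) :
    MemEdge s (p ++ r) a b ↔
      MemEdge s p a b ∨ MemEdge ((s :: p).getLast (List.cons_ne_nil s p)) r a b := by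
  induction p generalizing s with
  | nil => simp
  | cons x p ih => simp [ih, or_assoc]

lemma IsWalkFrom.of_append_cons {y : V} {A B : List V} (h : IsWalkFrom E s t (A ++ y :: B)) :
    IsWalkFrom E y t B := by
  induction A generalizing s with
  | nil => exact (isWalkFrom_cons.mp h).2
  | cons a A ih => exact ih (isWalkFrom_cons.mp h).2

lemma walkWeight_le_append_cons (y : V) (A B : List V) :
    walkWeight w y B ≤ walkWeight w s (A ++ y :: B) := by
  rw [List.append_cons, walkWeight_append]
  simp

lemma memEdge_append_cons_of_memEdge {y a b : V} (A : List V) {B : List V}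
    (h : MemEdge y B a b) : MemEdge s (A ++ y :: B) a b := by
  rw [List.append_cons, memEdge_append]
  simp [h]

lemma IsWalkFrom.exists_nodup {p : List V} (hp : IsWalkFrom E s t p) :
    ∃ p', IsWalkFrom E s t p' ∧ (s :: p').Nodup ∧ walkWeight w s p' ≤ walkWeight w s p ∧
      ∀ a b, MemEdge s p' a b → MemEdge s p a b := by
  induction p generalizing s with
  | nil => exact ⟨[], hp, List.nodup_singleton s, le_rfl, fun _ _ h => h⟩
  | cons x p ih =>
    obtain ⟨hsx, hxp⟩ := isWalkFrom_cons.mp hp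
    obtain ⟨p₀, hp₀, hnd, hwt, hedge⟩ := ih hxp
    have hwt' : walkWeight w s (x :: p₀) ≤ walkWeight w s (x :: p) := by
      simpa only [walkWeight_cons] using add_le_add_right hwt _
    have hedge' : ∀ a b, MemEdge s (x :: p₀) a b → MemEdge s (x :: p) a b := by
      simp only [memEdge_cons]
      exact fun a b => Or.imp_right (hedge a b)
    by_cases hs : s ∈ x :: p₀
    · -- `s` is revisited: cut out the closed walk from `s` back to itself
      obtain ⟨A, B, hAB⟩ := List.append_of_mem hs
      rw [hAB] at hnd hwt' hedge'
      have hwalk : IsWalkFrom E s t (A ++ s :: B) := hAB ▸ isWalkFrom_cons.mpr ⟨hsx, hp₀⟩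
      exact ⟨B, hwalk.of_append_cons, hnd.sublist (List.sublist_append_right A _),
        (walkWeight_le_append_cons s A B).trans hwt',
        fun a b h => hedge' a b (memEdge_append_cons_of_memEdge A h)⟩
    · exact ⟨x :: p₀, isWalkFrom_cons.mpr ⟨hsx, hp₀⟩, List.nodup_cons.mpr ⟨hs, hnd⟩, hwt', hedge'⟩

lemma IsWalkFrom.exists_reverse (hE : Symmetric E) (hw : ∀ a b, w a b = w b a) {p : List V}
    (hp : IsWalkFrom E s t p) :
    ∃ r, IsWalkFrom E t s r ∧ walkWeight w t r = walkWeight w s p ∧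
      ∀ a b, MemEdge t r a b → MemEdge s p a b := by
  induction p generalizing s with
  | nil =>
    obtain rfl := isWalkFrom_nil.mp hp
    exact ⟨[], hp, rfl, fun _ _ h => h⟩
  | cons x p ih =>
    obtain ⟨hsx, hxp⟩ := isWalkFrom_cons.mp hp
    obtain ⟨r, hr, hwt, hedge⟩ := ih hxp
    refine ⟨r ++ [s], hr.append_iff.mpr (by simpa using hE hsx), ?_, fun a b h => ?_⟩
    · rw [walkWeight_append, hr.2, hwt]
      simp [hw x s, add_comm]
    · rw [memEdge_append, hr.2] at h
      rcases h with h | h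
      · exact memEdge_cons.mpr (Or.inr (hedge a b h))
      · simp only [memEdge_cons, not_memEdge_nil, or_false] at h
        exact memEdge_cons.mpr (Or.inl (by tauto))

lemma IsWalkFrom.exists_uCycle_of_not_memEdge {u v : V} {p : List V} (huv : u ≠ v)
    (hvu : E v u) (hp : IsWalkFrom E u v p) (hpe : ¬ MemEdge u p u v) :
    ∃ c, IsUCycleThrough E u c ∧ walkWeight w u c ≤ walkWeight w u p + w v u := by
  obtain ⟨p', hp', hnd, hwt, hedge⟩ := hp.exists_nodup (w := w)
  have hlen : 2 ≤ p'.length := by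
    match p', hp', hedge with
    | [], h, _ => exact absurd (isWalkFrom_nil.mp h) huv
    | [y], h, he =>
      obtain rfl : y = v := (by simpa using h : E u y ∧ y = v).2
      exact absurd (he u y (by simp)) hpe
    | _ :: _ :: _, _, _ => simp
  refine ⟨p' ++ [u], ⟨hp'.append_iff.mpr (by simpa using hvu), by simp; omega,
    List.nodup_append_comm.mpr hnd⟩, ?_⟩
  rw [walkWeight_append, hp'.2]
  simpa using hwt

end Walks

theorem stmt15_general (E : V → V → Prop) (hE : Symmetric E) (w : V → V → NNReal)
    (hw : ∀ a b, w a b = w b a) (u v q : V) (huv : E u v) (hne : u ≠ v)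
    (h1 : ℕ) (P1 P2 : List V)
    (hP1 : IsWalkFrom E q u P1)
    (hw1 : walkWeight w q P1 = hopDist E w h1 q u)
    (hP2 : IsWalkFrom E q v P2)
    (hw2 : walkWeight w q P2 = hopDist E w h1 q v)
    (hne1 : ¬ MemEdge q P1 u v) (hne2 : ¬ MemEdge q P2 u v) :
    (∃ (x : V) (c : List V), IsUCycleThrough E x c ∧
      walkWeight w x c ≤ (w u v : ℝ≥0∞) + hopDist E w h1 q u + hopDist E w h1 q v) ∧
    (⨅ (x : V) (c : List V) (_ : IsUCycleThrough E x c), walkWeight w x c)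
      ≤ (w u v : ℝ≥0∞) + hopDist E w h1 q u + hopDist E w h1 q v := by
  obtain ⟨R, hR, hRw, hRe⟩ := hP1.exists_reverse (w := w) hE hw
  have hW : IsWalkFrom E u v (R ++ P2) := hR.append_iff.mpr hP2
  have hWw : walkWeight w u (R ++ P2) = walkWeight w q P1 + walkWeight w q P2 := by
    rw [walkWeight_append, hR.2, hRw]
  have hWe : ¬ MemEdge u (R ++ P2) u v := by
    rw [memEdge_append, hR.2]
    rintro (h | h)
    exacts [hne1 (hRe u v h), hne2 h]
  obtain ⟨c, hc, hcw⟩ := hW.exists_uCycle_of_not_memEdge (w := w) hne (hE huv) hWe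
  have hbound : walkWeight w u c ≤ w u v + hopDist E w h1 q u + hopDist E w h1 q v :=
    calc walkWeight w u c ≤ walkWeight w u (R ++ P2) + w v u := hcw
      _ = w u v + hopDist E w h1 q u + hopDist E w h1 q v := by
        rw [hWw, hw1, hw2, hw v u]
        ring
  exact ⟨⟨u, c, hc, hbound⟩, (iInf_le_of_le u (iInf_le_of_le c (iInf_le _ hc))).trans hbound⟩

theorem stmt15 (E : V → V → Prop) (hE : Symmetric E) (w : V → V → NNReal)
    (hw : ∀ a b, w a b = w b a) (u v q : V) (huv : E u v) (hne : u ≠ v)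
    (h1 : ℕ) (P1 P2 : List V)
    (hP1 : IsWalkFrom E q u P1) (hl1 : P1.length ≤ h1)
    (hw1 : walkWeight w q P1 = hopDist E w h1 q u)
    (hfin1 : hopDist E w h1 q u ≠ ⊤)
    (hP2 : IsWalkFrom E q v P2) (hl2 : P2.length ≤ h1)
    (hw2 : walkWeight w q P2 = hopDist E w h1 q v)
    (hfin2 : hopDist E w h1 q v ≠ ⊤)
    (hne1 : ¬ MemEdge q P1 u v) (hne2 : ¬ MemEdge q P2 u v) :
    (∃ (x : V) (c : List V), IsUCycleThrough E x c ∧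
      walkWeight w x c ≤ (w u v : ℝ≥0∞) + hopDist E w h1 q u + hopDist E w h1 q v) ∧
    (⨅ (x : V) (c : List V) (_ : IsUCycleThrough E x c), walkWeight w x c)
      ≤ (w u v : ℝ≥0∞) + hopDist E w h1 q u + hopDist E w h1 q v :=
  stmt15_general E hE w hw u v q huv hne h1 P1 P2 hP1 hw1 hP2 hw2 hne1 hne2
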